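/- arXiv:1808.01528 — 5 statements merged into one kernel-verified Lean document; each statement's English description precedes it below -/
import Mathlib

section
/- Let j be a nonnegative integer and suppose m = 2^L·h + 1, where L ≥ 3 is an integer and h is an odd positive integer. Let ℓ = ⌈log₂(m+j)⌉ (the least nonnegative integer with m + j ≤ 2^ℓ). Then, as real numbers, 𝔎_j(m) < 2^ℓ + (2^ℓ·(2^{L+1} + 4) − j)/m. -/
/-- The Thue–Morse word, 1-indexed: `tm i` is the parity (0 or 1) of the number of 1's
in the binary expansion of `i - 1`. -/
def tm (i : ℕ) : ℕ := ((Nat.digits 2 (i - 1)).sum) % 2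

/-- The `r`-th block (0-indexed) of size `m` of the `j`-fix of the Thue–Morse word:
the factor `⟨j + r*m + 1, j + (r+1)*m⟩`. -/
def tmBlock (j m r : ℕ) : List ℕ := (List.range m).map fun i => tm (j + r * m + i + 1)

/-- The `j`-fix of the Thue–Morse word of length `k*m` is a `k`-anti-power, i.e. the
`k` blocks `⟨j + r*m + 1, j + (r+1)*m⟩` for `0 ≤ r ≤ k-1` are pairwise distinct. -/
def IsAntipowerJfix (j k m : ℕ) : Prop :=
  ∀ r₁ < k, ∀ r₂ < k, tmBlock j m r₁ = tmBlock j m r₂ → r₁ = r₂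

/-- `gammaJ j k` is the least positive integer `m` such that the `j`-fix of the
Thue–Morse word of length `k*m` is a `k`-anti-power. -/
noncomputable def gammaJ (j k : ℕ) : ℕ := sInf {m : ℕ | 0 < m ∧ IsAntipowerJfix j k m}

/-- `KJ j m` is the least positive integer `k` such that the `j`-fix of the
Thue–Morse word of length `k*m` is not a `k`-anti-power. -/
noncomputable def KJ (j m : ℕ) : ℕ := sInf {k : ℕ | 0 < k ∧ ¬ IsAntipowerJfix j k m}

/-- `GammaJ j k` is the supremum (in `ℕ`, with `sSup ∅ = 0` and `sSup` of an unbounded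
set `= 0`) of the set of odd positive integers `m` such that the `j`-fix of the
Thue–Morse word of length `k*m` is not a `k`-anti-power. -/
noncomputable def GammaJ (j k : ℕ) : ℕ := sSup {m : ℕ | Odd m ∧ ¬ IsAntipowerJfix j k m}

/-- Parity of the binary digit sum. -/
def EE (n : ℕ) : ℕ := ((Nat.digits 2 n).sum) % 2

lemma tm_succ (y : ℕ) : tm (y + 1) = EE y := rfl

lemma EE_lt_two (n : ℕ) : EE n < 2 := Nat.mod_lt _ (by norm_num)

lemma EE_zero : EE 0 = 0 := by simp [EE]

lemma EE_two_mul (w b : ℕ) (hb : b < 2) : EE (2 * w + b) = (b + EE w) % 2 := by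
  rcases Nat.eq_zero_or_pos (2 * w + b) with h0 | hpos
  · have hw : w = 0 := by omega
    have hb0 : b = 0 := by omega
    subst hw; subst hb0; simp [EE]
  · unfold EE
    rw [Nat.digits_def' (by norm_num : 1 < 2) hpos]
    have h1 : (2 * w + b) % 2 = b := by omega
    have h2 : (2 * w + b) / 2 = w := by omega
    rw [h1, h2, List.sum_cons]
    omega

lemma EE_one : EE 1 = 1 := by
  have := EE_two_mul 0 1 (by norm_num); simpa [EE_zero] using this

lemma EE_two : EE 2 = 1 := by
  have := EE_two_mul 1 0 (by norm_num); simpa [EE_one] using this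

lemma EE_three : EE 3 = 0 := by
  have := EE_two_mul 1 1 (by norm_num); simpa [EE_one] using this

lemma EE_four : EE 4 = 1 := by
  have := EE_two_mul 2 0 (by norm_num); simpa [EE_two] using this

lemma EE_split (n u v : ℕ) (hv : v < 2 ^ n) : EE (2 ^ n * u + v) = (EE u + EE v) % 2 := by
  induction n generalizing v with
  | zero =>
    have hv0 : v = 0 := by simpa using Nat.lt_one_iff.mp (by simpa using hv)
    subst hv0
    have := EE_lt_two u
    simp [EE_zero]
    omega
  | succ n ih =>
    have hp : (2:ℕ) ^ (n+1) = 2 ^ n * 2 := pow_succ 2 n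
    have hv2 : v / 2 < 2 ^ n := by omega
    have hb : v % 2 < 2 := Nat.mod_lt _ (by norm_num)
    have hv' : 2 * (v / 2) + v % 2 = v := Nat.div_add_mod v 2
    have key : 2 ^ (n+1) * u + v = 2 * (2 ^ n * u + v / 2) + v % 2 := by
      rw [hp]; ring_nf; omega
    rw [key, EE_two_mul _ _ hb, ih _ hv2]
    have hEv : EE v = (v % 2 + EE (v / 2)) % 2 := by
      conv_lhs => rw [← hv']
      exact EE_two_mul _ _ hb
    have := EE_lt_two u; have := EE_lt_two (v / 2); have := EE_lt_two v
    omega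

/-- Existence of a small `c` with the two parity matches, given `m = 2^L h + 1`. -/
lemma exists_c (L h m : ℕ) (hL : 3 ≤ L) (hh : Odd h) (hm : m = 2 ^ L * h + 1) :
    ∃ c, 1 ≤ c ∧ c ≤ 2 ^ (L + 1) + 2 ∧ EE (m + c) = EE c ∧ EE (m + c + 1) = EE (c + 1) := by
  have h8 : (8:ℕ) ≤ 2 ^ L := by
    calc (8:ℕ) = 2 ^ 3 := by norm_num
    _ ≤ 2 ^ L := Nat.pow_le_pow_right (by norm_num) hL
  have hLL : (2:ℕ) ^ (L + 1) = 2 ^ L * 2 := pow_succ 2 L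
  have hEh := EE_lt_two h
  rcases (by omega : EE h = 0 ∨ EE h = 1) with hEh0 | hEh1
  · -- E h = 0 : use deeper cases depending on E (h+1)
    have hodd : h % 2 = 1 := Nat.odd_iff.mp hh
    obtain ⟨u, hu⟩ : ∃ u, h = 2 * u + 1 := ⟨h / 2, by omega⟩
    set v := u + 1 with hv
    have hh1 : h + 1 = 2 * v + 0 := by omega
    have hEh1v : EE (h + 1) = EE v := by
      rw [hh1, EE_two_mul _ _ (by norm_num)]
      have := EE_lt_two v; omega
    have hh2 : h + 2 = 2 * v + 1 := by omega
    have hEh2v : EE (h + 2) = (1 + EE v) % 2 := by rw [hh2, EE_two_mul _ _ (by norm_num)]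
    have hEv2 := EE_lt_two v
    rcases (by omega : EE v = 0 ∨ EE v = 1) with hv0 | hv1
    · -- E v = 0, i.e. E (h+1) = 0 : c = 2^L + 2
      refine ⟨2 ^ L + 2, by omega, by omega, ?_, ?_⟩
      · have e1 : m + (2 ^ L + 2) = 2 ^ L * (h + 1) + 3 := by rw [hm]; ring
        have e2 : (2:ℕ) ^ L + 2 = 2 ^ L * 1 + 2 := by ring
        rw [e1, e2, EE_split L (h+1) 3 (by omega), EE_split L 1 2 (by omega),
          EE_one, EE_two, EE_three, hEh1v, hv0]
      · have e1 : m + (2 ^ L + 2) + 1 = 2 ^ L * (h + 1) + 4 := by rw [hm]; ring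
        have e2 : (2:ℕ) ^ L + 2 + 1 = 2 ^ L * 1 + 3 := by ring
        rw [e1, e2, EE_split L (h+1) 4 (by omega), EE_split L 1 3 (by omega),
          EE_one, EE_three, EE_four, hEh1v, hv0]
    · -- E v = 1, i.e. E (h+1) = 1 : c = 2^(L+1) + 2, uses E (h+2) = 0
      have hEh2 : EE (h + 2) = 0 := by rw [hEh2v, hv1]
      refine ⟨2 ^ (L+1) + 2, by omega, le_refl _, ?_, ?_⟩
      · have e1 : m + (2 ^ (L+1) + 2) = 2 ^ L * (h + 2) + 3 := by rw [hm, hLL]; ring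
        have e2 : (2:ℕ) ^ (L+1) + 2 = 2 ^ L * 2 + 2 := by rw [hLL]
        rw [e1, e2, EE_split L (h+2) 3 (by omega), EE_split L 2 2 (by omega),
          EE_two, EE_three, hEh2]
      · have e1 : m + (2 ^ (L+1) + 2) + 1 = 2 ^ L * (h + 2) + 4 := by rw [hm, hLL]; ring
        have e2 : (2:ℕ) ^ (L+1) + 2 + 1 = 2 ^ L * 2 + 3 := by rw [hLL]
        rw [e1, e2, EE_split L (h+2) 4 (by omega), EE_split L 2 3 (by omega),
          EE_two, EE_three, EE_four, hEh2]
  · -- E h = 1 : c = 2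
    refine ⟨2, by omega, by omega, ?_, ?_⟩
    · have e1 : m + 2 = 2 ^ L * h + 3 := by rw [hm]
      rw [e1, EE_split L h 3 (by omega), EE_three, EE_two, hEh1]
    · have e1 : m + 2 + 1 = 2 ^ L * h + 4 := by rw [hm]
      rw [e1, EE_split L h 4 (by omega), EE_four, EE_three, hEh1]

/-- Key block-equality step at the level of `EE`. -/
lemma EE_block (n c m x : ℕ) (hx : x < 2 ^ n + 2 ^ n)
    (h0 : EE (m + c) = EE c) (h1 : EE (m + c + 1) = EE (c + 1)) :
    EE (2 ^ n * c + x) = EE (2 ^ n * (c + m) + x) := by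
  rcases lt_or_ge x (2 ^ n) with hlt | hge
  · rw [EE_split n c x hlt, EE_split n (c + m) x hlt]
    have hcm : EE (c + m) = EE c := by rw [Nat.add_comm c m, h0]
    rw [hcm]
  · obtain ⟨p, hp⟩ := Nat.exists_eq_add_of_le hge
    have hplt : p < 2 ^ n := by omega
    have e1 : 2 ^ n * c + x = 2 ^ n * (c + 1) + p := by rw [hp]; ring
    have e2 : 2 ^ n * (c + m) + x = 2 ^ n * (c + m + 1) + p := by rw [hp]; ring
    rw [e1, e2, EE_split n _ _ hplt, EE_split n _ _ hplt]
    have hcm : EE (c + m + 1) = EE (c + 1) := by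
      rw [show c + m + 1 = m + c + 1 by ring, h1]
    rw [hcm]

theorem KJ_lt_one_mod_eight (j L h m ℓ : ℕ) (hL : 3 ≤ L) (hh : Odd h) (hh' : 0 < h)
    (hm : m = 2 ^ L * h + 1)
    (hℓ : IsLeast {l : ℕ | m + j ≤ 2 ^ l} ℓ) :
    (KJ j m : ℝ) < 2 ^ ℓ + ((2 : ℝ) ^ ℓ * (2 ^ (L + 1) + 4) - j) / m := by
  have hm0 : 0 < m := by rw [hm]; omega
  have hPle : m + j ≤ 2 ^ ℓ := hℓ.1
  obtain ⟨c, hc1, hcb, hE0, hE1⟩ := exists_c L h m hL hh hm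
  -- basic bounds
  have hP0 : 0 < 2 ^ ℓ := pow_pos (by norm_num) ℓ
  have hmP : m ≤ 2 ^ ℓ := by omega
  have hjP : j ≤ 2 ^ ℓ := by omega
  have hjc : j ≤ 2 ^ ℓ * c := le_trans hjP (Nat.le_mul_of_pos_right _ (by omega))
  obtain ⟨D, hD⟩ := Nat.exists_eq_add_of_le hjc
  -- find r₁, s with m * r₁ = D + s, s < m
  obtain ⟨r₁, s, hs, hr⟩ : ∃ r s, s < m ∧ m * r = D + s := by
    obtain ⟨q, u, hqu, hu⟩ : ∃ q u, m * q + u = D ∧ u < m :=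
      ⟨D / m, D % m, Nat.div_add_mod D m, Nat.mod_lt D hm0⟩
    by_cases h0 : u = 0
    · exact ⟨q, 0, hm0, by omega⟩
    · refine ⟨q + 1, m - u, by omega, ?_⟩
      have hms : m * (q + 1) = m * q + m := by ring
      omega
  have ha : j + r₁ * m = 2 ^ ℓ * c + s := by rw [mul_comm r₁ m]; omega
  set r₂ := r₁ + 2 ^ ℓ with hr₂
  set k := r₂ + 1 with hk
  -- block equality
  have hblocks : tmBlock j m r₁ = tmBlock j m r₂ := by
    unfold tmBlock
    apply List.map_congr_left
    intro i hi
    have him : i < m := List.mem_range.mp hi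
    have e1 : j + r₁ * m + i = 2 ^ ℓ * c + (s + i) := by omega
    have e2 : j + r₂ * m + i = 2 ^ ℓ * (c + m) + (s + i) := by
      have : r₂ * m = r₁ * m + 2 ^ ℓ * m := by rw [hr₂]; ring
      have h2 : 2 ^ ℓ * (c + m) = 2 ^ ℓ * c + 2 ^ ℓ * m := by ring
      omega
    rw [tm_succ, tm_succ, e1, e2]
    exact EE_block ℓ c m (s + i) (by omega) hE0 hE1
  -- not an antipower for k blocks
  have hnot : ¬ IsAntipowerJfix j k m := by
    intro H
    have := H r₁ (by omega) r₂ (by omega) hblocks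
    omega
  have hKJle : KJ j m ≤ k := Nat.sInf_le ⟨by omega, hnot⟩
  -- numeric bound, first in ℕ
  have hmul : 2 ^ ℓ * c ≤ 2 ^ ℓ * (2 ^ (L + 1) + 2) := Nat.mul_le_mul le_rfl hcb
  have hkm : k * m = m * r₁ + 2 ^ ℓ * m + m := by rw [hk, hr₂]; ring
  have hsplit : 2 ^ ℓ * (2 ^ (L + 1) + 4) = 2 ^ ℓ * (2 ^ (L + 1) + 2) + 2 ^ ℓ + 2 ^ ℓ := by
    ring
  have hnat : k * m + j < 2 ^ ℓ * m + 2 ^ ℓ * (2 ^ (L + 1) + 4) := by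
    omega
  -- pass to ℝ
  have hm' : (0:ℝ) < m := by exact_mod_cast hm0
  have hKJr : (KJ j m : ℝ) ≤ k := by exact_mod_cast hKJle
  have hnatr : (k:ℝ) * m + j < 2 ^ ℓ * m + 2 ^ ℓ * (2 ^ (L + 1) + 4) := by
    exact_mod_cast hnat
  have h2 : ((k:ℝ) - 2 ^ ℓ) * m < 2 ^ ℓ * (2 ^ (L + 1) + 4) - j := by
    have hx : ((k:ℝ) - 2 ^ ℓ) * m = k * m - 2 ^ ℓ * m := by ring
    rw [hx]; linarith
  have h3 : (k:ℝ) - 2 ^ ℓ < (2 ^ ℓ * (2 ^ (L + 1) + 4) - j) / m := (lt_div_iff₀ hm').mpr h2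
  linarith
end

section
/- Let j be a nonnegative integer and suppose m = 2^L·h + 1, where L ≥ 3 is an integer and h is an odd positive integer. Let ℓ = ⌈log₂(m+j)⌉ (the least nonnegative integer with m + j ≤ 2^ℓ). Suppose n is an integer with 2 ≤ n ≤ 2^{L−1}, t_{m−n} = t_{m−n+1}, and m + j ≤ (1 − 1/(2n+2))·2^ℓ. Then, as real numbers, 𝔎_j(m) ≤ 2^{ℓ+1} − (2^{ℓ+1}·(n−1) + j)/m. -/
/-- digit sum base 2 -/
def S (x : ℕ) : ℕ := (Nat.digits 2 x).sum

lemma S_two_mul (x : ℕ) : S (2*x) = S x := by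
  rcases Nat.eq_zero_or_pos x with rfl | hx
  · rfl
  · unfold S
    rw [Nat.digits_def' (by norm_num : (1:ℕ) < 2) (by omega : 0 < 2*x)]
    simp [Nat.mul_div_cancel_left _ (by norm_num : 0 < 2)]

lemma S_two_mul_add_one (x : ℕ) : S (2*x+1) = S x + 1 := by
  unfold S
  rw [Nat.digits_def' (by norm_num : (1:ℕ) < 2) (by omega : 0 < 2*x+1)]
  have h1 : (2*x+1) % 2 = 1 := by omega
  have h2 : (2*x+1) / 2 = x := by omega
  rw [h1, h2]
  simp [Nat.add_comm]

lemma S_add (e b c : ℕ) (hc : c < 2^e) : S (2^e * b + c) % 2 = (S b + S c) % 2 := by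
  induction e generalizing c with
  | zero =>
    have : c = 0 := by simpa using hc
    subst this
    simp [S]
  | succ e ih =>
    have hc2 : c / 2 < 2^e := by
      have : 2^(e+1) = 2*2^e := by rw [pow_succ]; ring
      omega
    rcases Nat.mod_two_eq_zero_or_one c with hpar | hpar
    · obtain ⟨c', rfl⟩ : ∃ c', c = 2*c' := ⟨c/2, by omega⟩
      have hc' : c' < 2^e := by omega
      have he : 2^(e+1) * b + 2*c' = 2*(2^e*b + c') := by rw [pow_succ]; ring
      rw [he, S_two_mul, ih _ hc', S_two_mul]
    · obtain ⟨c', rfl⟩ : ∃ c', c = 2*c' + 1 := ⟨c/2, by omega⟩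
      have hc' : c' < 2^e := by omega
      have he : 2^(e+1) * b + (2*c'+1) = 2*(2^e*b + c') + 1 := by rw [pow_succ]; ring
      rw [he, S_two_mul_add_one, S_two_mul_add_one]
      have h1 := ih c' hc'
      omega

lemma S_one : S 1 = 1 := by
  have := S_two_mul_add_one 0
  simpa [S] using this

lemma S_three : S 3 = 2 := by
  have := S_two_mul_add_one 1
  rw [S_one] at this
  simpa using this

lemma S_two : S 2 = 1 := by
  have := S_two_mul 1
  rw [S_one] at this
  simpa using this

lemma S_four : S 4 = 1 := by
  have := S_two_mul 2
  rw [S_two] at this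
  simpa using this

lemma S_five : S 5 = 2 := by
  have := S_two_mul_add_one 2
  rw [S_two] at this
  simpa using this

theorem KJ_le_one_mod_eight_small (j L h m ℓ n : ℕ) (hL : 3 ≤ L) (hh : Odd h)
    (hh' : 0 < h) (hm : m = 2 ^ L * h + 1)
    (hℓ : IsLeast {l : ℕ | m + j ≤ 2 ^ l} ℓ)
    (hn2 : 2 ≤ n) (hn : n ≤ 2 ^ (L - 1))
    (ht : tm (m - n) = tm (m - n + 1))
    (hmj : (m + j : ℝ) ≤ (1 - 1 / (2 * n + 2)) * 2 ^ ℓ) :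
    (KJ j m : ℝ) ≤ 2 ^ (ℓ + 1) - ((2 : ℝ) ^ (ℓ + 1) * ((n : ℝ) - 1) + j) / m := by
  obtain ⟨h', rfl⟩ : ∃ h', h = h' + 1 := ⟨h - 1, by omega⟩
  have hll : m + j ≤ 2 ^ ℓ := hℓ.1
  have hL8 : (8:ℕ) ≤ 2 ^ L := by
    calc (8:ℕ) = 2^3 := by norm_num
    _ ≤ 2^L := Nat.pow_le_pow_right (by norm_num) hL
  have hpowL : 2 ^ L = 2 * 2 ^ (L-1) := by
    rw [← pow_succ']
    congr 1
    omega
  have hmpos : 0 < m := by omega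
  -- exclude n = 2^(L-1) using ht
  have hnlt : n < 2 ^ (L-1) := by
    rcases Nat.lt_or_ge n (2^(L-1)) with h | h
    · exact h
    · exfalso
      have hne : n = 2^(L-1) := le_antisymm hn h
      have hB : 4 ≤ 2^(L-1) := by omega
      have e1 : m - n = 2^(L-1)*(2*h'+1) + 1 := by
        have : 2^(L-1)*(2*h'+1) + 2^(L-1) = 2^L * (h'+1) := by
          rw [hpowL]; ring
        omega
      rw [e1] at ht
      have t1 : tm (2^(L-1)*(2*h'+1) + 1) = S (2^(L-1)*(2*h'+1)) % 2 := rfl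
      have t2 : tm (2^(L-1)*(2*h'+1) + 1 + 1) = S (2^(L-1)*(2*h'+1) + 1) % 2 := rfl
      rw [t1, t2] at ht
      have s1 : S (2^(L-1)*(2*h'+1)) % 2 = (S (2*h'+1) + S 0) % 2 := by
        have := S_add (L-1) (2*h'+1) 0 (by omega)
        simpa using this
      have s2 : S (2^(L-1)*(2*h'+1) + 1) % 2 = (S (2*h'+1) + S 1) % 2 :=
        S_add (L-1) (2*h'+1) 1 (by omega)
      rw [s1, s2] at ht
      have hS0 : S 0 = 0 := by simp [S]
      rw [S_one, hS0] at ht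
      omega
  have hn2L : 2*n + 2 ≤ 2^L := by omega
  -- the window index
  set a := 2^L * h' + 3 with ha_def
  have ham : a + m = 2^L*(2*h'+1) + 4 := by rw [hm]; ring
  have ham1 : a + m + 1 = 2^L*(2*h'+1) + 5 := by rw [hm]; ring
  have hSh : S (2*h'+1) = S h' + 1 := S_two_mul_add_one h'
  -- window sign equalities
  have hwin0 : S a % 2 = S (a+m) % 2 := by
    rw [ha_def, ham, S_add L h' 3 (by omega), S_add L (2*h'+1) 4 (by omega),
      S_three, S_four, hSh]
    all_goals omega
  have hwin1 : S (a+1) % 2 = S (a+m+1) % 2 := by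
    have ha1 : a + 1 = 2^L * h' + 4 := by rw [ha_def]
    rw [ha1, ham1, S_add L h' 4 (by omega), S_add L (2*h'+1) 5 (by omega),
      S_four, S_five, hSh]
    all_goals omega
  have hm2l : m ≤ 2^ℓ := by omega
  -- choose the block index r
  obtain ⟨A, hA⟩ : ∃ A, A = 2^ℓ * a := ⟨_, rfl⟩
  obtain ⟨r, hp1, hp2⟩ : ∃ r, A ≤ j + m * r ∧ j + m * r < A + 2^ℓ := by
    refine ⟨(A - j + (m-1))/m, ?_, ?_⟩ <;>
    · have hdm := Nat.div_add_mod (A - j + (m-1)) m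
      have hmod : (A - j + (m-1)) % m < m := Nat.mod_lt _ hmpos
      omega
  have hcomm : r * m = m * r := Nat.mul_comm r m
  -- the two blocks are equal
  have key : ∀ z < 2^ℓ + 2^ℓ, S (A + z) % 2 = S (A + 2^ℓ*m + z) % 2 := by
    intro z hz
    have e3 : A + 2^ℓ*m = 2^ℓ*(a+m) := by rw [hA]; ring
    rw [e3, hA]
    rcases Nat.lt_or_ge z (2^ℓ) with hlt | hge
    · rw [S_add ℓ a z hlt, S_add ℓ (a+m) z hlt]
      omega
    · have hz' : z - 2^ℓ < 2^ℓ := by omega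
      have e1 : 2^ℓ*a + z = 2^ℓ*(a+1) + (z - 2^ℓ) := by
        have : 2^ℓ*(a+1) = 2^ℓ*a + 2^ℓ := by ring
        omega
      have e2 : 2^ℓ*(a+m) + z = 2^ℓ*(a+m+1) + (z - 2^ℓ) := by
        have : 2^ℓ*(a+m+1) = 2^ℓ*(a+m) + 2^ℓ := by ring
        omega
      rw [e1, e2, S_add ℓ (a+1) _ hz', S_add ℓ (a+m+1) _ hz']
      omega
  have hblock : tmBlock j m r = tmBlock j m (r + 2^ℓ) := by
    unfold tmBlock
    apply List.map_congr_left
    intro i hi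
    rw [List.mem_range] at hi
    have t1 : tm (j + r * m + i + 1) = S (j + r*m + i) % 2 := rfl
    have t2 : tm (j + (r + 2^ℓ) * m + i + 1) = S (j + (r + 2^ℓ)*m + i) % 2 := rfl
    rw [t1, t2]
    set z := j + r*m + i - A with hz_def
    have hzb : z < 2^ℓ + 2^ℓ := by omega
    have e1 : j + r*m + i = A + z := by omega
    have e2 : j + (r + 2^ℓ)*m + i = A + 2^ℓ*m + z := by
      have h1 : (r + 2^ℓ)*m = r*m + 2^ℓ*m := by ring
      omega
    rw [e1, e2]
    exact key z hzb
  -- KJ bound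
  set k₀ := r + 2^ℓ + 1 with hk_def
  have hpow_pos : 0 < 2^ℓ := Nat.pow_pos (by norm_num)
  have hK : KJ j m ≤ k₀ := by
    apply Nat.sInf_le
    constructor
    · omega
    · intro hap
      have := hap r (by omega) (r + 2^ℓ) (by omega) hblock
      omega
  -- numeric bound in ℕ : k₀ * m + 2^(ℓ+1)*(n-1) + j ≤ 2^(ℓ+1) * m
  obtain ⟨n', rfl⟩ : ∃ n', n = n' + 2 := ⟨n - 2, by omega⟩
  have hanm : a + 2*(n'+2) ≤ m := by
    have : 2^L*(h'+1) = 2^L*h' + 2^L := by ring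
    omega
  have hmul : 2^ℓ * (a + 2*(n'+2)) ≤ 2^ℓ * m := Nat.mul_le_mul_left _ hanm
  have hN : k₀ * m + 2^(ℓ+1)*(n'+2-1) + j ≤ 2^(ℓ+1) * m := by
    have e1 : k₀ * m = r*m + 2^ℓ*m + m := by rw [hk_def]; ring
    have e7 : A = 2^ℓ*a := hA
    have e2 : 2^(ℓ+1)*(n'+2-1) = 2*(2^ℓ*(n'+1)) := by
      rw [pow_succ, show n'+2-1 = n'+1 from rfl]
      ring
    have e3 : 2^ℓ * (a + 2*(n'+2)) = 2^ℓ*a + 2^ℓ*(n'+1)*2 + 2^ℓ*2 := by ring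
    have e4 : 2^(ℓ+1) * m = 2^ℓ*m + 2^ℓ*m := by rw [pow_succ]; ring
    have e5 : 2^ℓ*(n'+1)*2 = 2*(2^ℓ*(n'+1)) := by ring
    have e6 : 2^ℓ*2 = 2^ℓ + 2^ℓ := by ring
    omega
  -- transfer to ℝ
  have hKr : (KJ j m : ℝ) ≤ (k₀ : ℝ) := by exact_mod_cast hK
  have hNr : (k₀ : ℝ) * m + 2^(ℓ+1)*((n'+2 : ℕ) - 1 : ℕ) + j ≤ 2^(ℓ+1) * m := by
    exact_mod_cast hN
  have hmr : (0:ℝ) < (m:ℝ) := by exact_mod_cast hmpos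
  have hcast : (((n'+2 : ℕ) - 1 : ℕ) : ℝ) = ((n'+2 : ℕ) : ℝ) - 1 := by
    push_cast
    ring
  rw [hcast] at hNr
  have hdiv : (2^(ℓ+1)*(((n'+2:ℕ):ℝ) - 1) + j) / m ≤ 2^(ℓ+1) - (k₀:ℝ) := by
    rw [div_le_iff₀ hmr, sub_mul]
    nlinarith [hNr]
  linarith [hKr, hdiv]
end

section
/- Let m be a positive integer with m ≡ 29 (mod 32), let j be a nonnegative integer, and let ℓ = ⌈log₂(m+j)⌉ (the least nonnegative integer with m + j ≤ 2^ℓ). Then, as real numbers, 𝔎_j(m) < 2^{ℓ+1} + (20·2^ℓ − j)/m. -/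
/-- Digit-sum additivity for a split `a + 2^n * q` with `a < 2^n`. -/
lemma sum_digits_split (n q a : ℕ) (ha : a < 2 ^ n) :
    (Nat.digits 2 (a + 2 ^ n * q)).sum = (Nat.digits 2 a).sum + (Nat.digits 2 q).sum := by
  rcases Nat.eq_zero_or_pos q with rfl | hq
  · simp
  · have hlen : (Nat.digits 2 a).length ≤ n := by
      rcases Nat.eq_zero_or_pos a with rfl | hapos
      · simp
      · rw [Nat.digits_len 2 a (by norm_num) hapos.ne']
        exact Nat.succ_le_of_lt ((Nat.log_lt_iff_lt_pow (by norm_num) hapos.ne').mpr ha)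
    obtain ⟨k, hk⟩ := Nat.le.dest hlen
    rw [← hk, ← Nat.digits_append_zeroes_append_digits (by norm_num) hq]
    simp


theorem KJ_lt_twentynine_mod_thirtytwo (j m ℓ : ℕ) (hm : 0 < m)
    (hm29 : m % 32 = 29)
    (hℓ : IsLeast {l : ℕ | m + j ≤ 2 ^ l} ℓ) :
    (KJ j m : ℝ) < 2 ^ (ℓ + 1) + (20 * (2 : ℝ) ^ ℓ - j) / m := by
  have hmj : m + j ≤ 2 ^ ℓ := hℓ.1
  -- Blocks at indices c * 2^ℓ are determined by the parity of digit sum of c*m.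
  have hblock : ∀ c₁ c₂ : ℕ,
      (Nat.digits 2 (c₁ * m)).sum % 2 = (Nat.digits 2 (c₂ * m)).sum % 2 →
      tmBlock j m (c₁ * 2 ^ ℓ) = tmBlock j m (c₂ * 2 ^ ℓ) := by
    intro c₁ c₂ hpar
    unfold tmBlock
    apply List.map_congr_left
    intro i hi
    have hi' : i < m := List.mem_range.mp hi
    have hlt : j + i < 2 ^ ℓ := lt_of_lt_of_le (by omega) hmj
    have key : ∀ c : ℕ, tm (j + c * 2 ^ ℓ * m + i + 1)
        = ((Nat.digits 2 (j + i)).sum + (Nat.digits 2 (c * m)).sum) % 2 := by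
      intro c
      have : j + c * 2 ^ ℓ * m + i + 1 - 1 = (j + i) + 2 ^ ℓ * (c * m) := by
        rw [Nat.add_sub_cancel]; ring
      rw [tm, this, sum_digits_split ℓ (c * m) (j + i) hlt]
    rw [key c₁, key c₂, Nat.add_mod, hpar, ← Nat.add_mod]
  -- the j-fix of length (2^(ℓ+1)+1)*m is not an anti-power
  have hnot : ¬ IsAntipowerJfix j (2 ^ (ℓ + 1) + 1) m := by
    intro h
    have h2m : (Nat.digits 2 (2 * m)).sum % 2 = (Nat.digits 2 (1 * m)).sum % 2 := by
      have : (2 : ℕ) * m = 0 + 2 ^ 1 * (1 * m) := by ring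
      rw [this, sum_digits_split 1 (1 * m) 0 (by norm_num)]
      simp
    rcases Nat.even_or_odd ((Nat.digits 2 m).sum) with he | ho
    · -- blocks 0 and 2^ℓ are equal
      have heq : tmBlock j m (0 * 2 ^ ℓ) = tmBlock j m (1 * 2 ^ ℓ) := by
        apply hblock
        simp [Nat.even_iff.mp he]
      have hpos : 0 < 2 ^ ℓ := pow_pos (by norm_num) ℓ
      have := h (0 * 2 ^ ℓ) (by rw [pow_succ]; omega) (1 * 2 ^ ℓ)
        (by rw [pow_succ]; omega) heq
      omega
    · -- blocks 2^ℓ and 2^(ℓ+1) are equal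
      have heq : tmBlock j m (1 * 2 ^ ℓ) = tmBlock j m (2 * 2 ^ ℓ) := by
        exact hblock 1 2 h2m.symm
      have := h (1 * 2 ^ ℓ) (by rw [pow_succ]; omega) (2 * 2 ^ ℓ)
        (by rw [pow_succ]; omega) heq
      have hpos : 0 < 2 ^ ℓ := pow_pos (by norm_num) ℓ
      omega
  have hKJ : KJ j m ≤ 2 ^ (ℓ + 1) + 1 :=
    Nat.sInf_le ⟨by positivity, hnot⟩
  -- now the real-number estimate
  have hKJ' : (KJ j m : ℝ) ≤ 2 ^ (ℓ + 1) + 1 := by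
    calc (KJ j m : ℝ) ≤ ((2 ^ (ℓ + 1) + 1 : ℕ) : ℝ) := by exact_mod_cast hKJ
    _ = 2 ^ (ℓ + 1) + 1 := by push_cast; ring
  refine lt_of_le_of_lt hKJ' ?_
  have hm' : (0 : ℝ) < m := by exact_mod_cast hm
  have hmj' : (m : ℝ) + j ≤ 2 ^ ℓ := by exact_mod_cast hmj
  have h2ℓ : (0 : ℝ) < 2 ^ ℓ := by positivity
  have : (1 : ℝ) < (20 * (2 : ℝ) ^ ℓ - j) / m := by
    rw [lt_div_iff₀ hm']
    nlinarith
  linarith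
end

section
/- Let m be an odd positive integer with m ≢ 1 (mod 8) and m ≢ 29 (mod 32), let j be a nonnegative integer, and let ℓ = ⌈log₂(m+j)⌉ (the least nonnegative integer with m + j ≤ 2^ℓ). Then, as real numbers, 𝔎_j(m) < 2^ℓ + (37·2^ℓ − j)/m. -/
/-! ### Auxiliary development -/

/-- Parity of the binary digit sum (0-indexed Thue–Morse sequence). -/
def E (n : ℕ) : ℕ := ((Nat.digits 2 n).sum) % 2

lemma E_lt_two (n : ℕ) : E n < 2 := Nat.mod_lt _ (by norm_num)

lemma E_mod_two (n : ℕ) : E n % 2 = E n := Nat.mod_mod_of_dvd _ dvd_rfl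

lemma E_zero : E 0 = 0 := by simp [E]

lemma E_two_mul (n : ℕ) : E (2 * n) = E n := by
  rcases Nat.eq_zero_or_pos n with h | h
  · simp [h]
  · unfold E
    rw [Nat.digits_def' (by norm_num : 1 < 2) (by omega)]
    simp [Nat.mul_div_cancel_left _ (by norm_num : 0 < 2), Nat.mul_mod_right]

lemma E_two_mul_add_one (n : ℕ) : E (2 * n + 1) = (E n + 1) % 2 := by
  unfold E
  rw [Nat.digits_def' (by norm_num : 1 < 2) (by omega)]
  have h1 : (2 * n + 1) % 2 = 1 := by omega
  have h2 : (2 * n + 1) / 2 = n := by omega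
  rw [h1, h2]
  simp [List.sum_cons]
  omega

lemma E_split (L a b : ℕ) (hb : b < 2 ^ L) : E (a * 2 ^ L + b) = (E a + E b) % 2 := by
  induction L generalizing b with
  | zero =>
    interval_cases b
    simp [E_zero, E_mod_two]
  | succ L ih =>
    have hb2 : b / 2 < 2 ^ L := by
      rw [pow_succ] at hb
      omega
    have harg : a * 2 ^ (L + 1) + b = 2 * (a * 2 ^ L + b / 2) + b % 2 := by
      have hb' : b = 2 * (b / 2) + b % 2 := by omega
      nth_rewrite 1 [hb']
      ring
    rcases Nat.mod_two_eq_zero_or_one b with h | h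
    · have hbb : b = 2 * (b / 2) := by omega
      rw [harg, h, add_zero, E_two_mul, ih _ hb2]
      conv_rhs => rw [hbb, E_two_mul]
    · have hbb : b = 2 * (b / 2) + 1 := by omega
      rw [harg, h, E_two_mul_add_one, ih _ hb2]
      conv_rhs => rw [hbb, E_two_mul_add_one]
      have := E_lt_two a; have := E_lt_two (b / 2)
      omega

lemma E_split64 (a b : ℕ) (hb : b < 64) : E (a * 64 + b) = (E a + E b) % 2 := by
  have h6 : (2:ℕ) ^ 6 = 64 := by norm_num
  have := E_split 6 a b (by rw [h6]; exact hb)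
  rwa [h6] at this

lemma E_step (L m x : ℕ) (h : E (x / 2 ^ L + m) = E (x / 2 ^ L)) :
    E (x + m * 2 ^ L) = E x := by
  have hdm := Nat.div_add_mod x (2 ^ L)
  have hmod : x % 2 ^ L < 2 ^ L := Nat.mod_lt _ (by positivity)
  set t := x / 2 ^ L with ht
  set w := x % 2 ^ L with hw
  have hx : x = 2 ^ L * t + w := by omega
  have h2 : x + m * 2 ^ L = (t + m) * 2 ^ L + w := by rw [hx]; ring
  have h3 : x = t * 2 ^ L + w := by rw [hx]; ring
  rw [h2, E_split L (t + m) w hmod, h, ← E_split L t w hmod, ← h3]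

/-- Fuel-based computable version of `E`, kernel-reducible for `decide`. -/
def pop : ℕ → ℕ → ℕ
  | 0, _ => 0
  | f+1, n => if n = 0 then 0 else (n % 2 + pop f (n / 2)) % 2

def E' (n : ℕ) : ℕ := pop n n

lemma pop_eq : ∀ f n, n ≤ f → pop f n = E n := by
  intro f
  induction f with
  | zero => intro n h; interval_cases n; simp [pop, E_zero]
  | succ f ih =>
    intro n h
    rcases Nat.eq_zero_or_pos n with h0 | h0
    · simp [pop, h0, E_zero]
    · rw [pop, if_neg (by omega)]
      rw [ih (n / 2) (by omega)]
      rcases Nat.mod_two_eq_zero_or_one n with h2 | h2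
      · have hn : n = 2 * (n / 2) := by omega
        rw [h2]; conv_rhs => rw [hn, E_two_mul]
        simp [E_mod_two]
      · have hn : n = 2 * (n / 2) + 1 := by omega
        rw [h2]; conv_rhs => rw [hn, E_two_mul_add_one]
        omega

lemma E'_eq (n : ℕ) : E' n = E n := pop_eq n n le_rfl

lemma tm_eq (n : ℕ) : tm (n + 1) = E n := by simp [tm, E]

lemma tmBlock_eq_of_window (j m L r : ℕ)
    (H : ∀ t, (j + r * m) / 2 ^ L ≤ t → t ≤ (j + r * m + (m - 1)) / 2 ^ L →
      E (t + m) = E t) :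
    tmBlock j m r = tmBlock j m (r + 2 ^ L) := by
  unfold tmBlock
  apply List.map_congr_left
  intro i hi
  rw [List.mem_range] at hi
  have harg : j + (r + 2 ^ L) * m + i = (j + r * m + i) + m * 2 ^ L := by ring
  rw [harg, tm_eq, tm_eq]
  set x := j + r * m + i with hx
  refine (E_step L m x ?_).symm
  refine H (x / 2 ^ L) (Nat.div_le_div_right (by omega)) (Nat.div_le_div_right (by omega))

lemma KJ_le (j m L r : ℕ)
    (H : ∀ t, (j + r * m) / 2 ^ L ≤ t → t ≤ (j + r * m + (m - 1)) / 2 ^ L →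
      E (t + m) = E t) :
    KJ j m ≤ r + 2 ^ L + 1 := by
  apply Nat.sInf_le
  constructor
  · positivity
  · intro hanti
    have hpow : 0 < 2 ^ L := Nat.pow_pos (by norm_num)
    have := hanti r (by omega) (r + 2 ^ L) (by omega) (tmBlock_eq_of_window j m L r H)
    omega

/-! ### The finite core check -/

def epsval (e0 e1 x : ℕ) : ℕ := if x < 64 then e0 else e1

def goodU (s e0 e1 u : ℕ) : Bool :=
  decide ((epsval e0 e1 (u+s) + E' ((u+s) % 64)) % 2 = E' u) &&
  decide ((epsval e0 e1 (u+1+s) + E' ((u+1+s) % 64)) % 2 = E' (u+1))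

def hypOK (s e0 e1 : ℕ) : Bool :=
  decide (s % 2 = 1) && decide (s % 8 ≠ 1) && decide (s % 32 ≠ 29) &&
  decide ((e0 + E' s) % 2 = 1) &&
  (if s = 63 then decide (e1 = 1) else decide ((e0 + E' (s+1)) % 2 = 1))

def coreCheck : Bool :=
  (List.range 64).all fun s => (List.range 2).all fun e0 => (List.range 2).all fun e1 =>
    !(hypOK s e0 e1) || ((List.range 35).any fun u => decide (1 ≤ u) && goodU s e0 e1 u)

lemma coreCheck_true : coreCheck = true := by decide

lemma core : ∀ s < 64, ∀ e0 < 2, ∀ e1 < 2, hypOK s e0 e1 = true →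
    ∃ u, u < 35 ∧ 1 ≤ u ∧ goodU s e0 e1 u = true := by
  intro s hs e0 he0 e1 he1 hhyp
  have h := coreCheck_true
  unfold coreCheck at h
  rw [List.all_eq_true] at h
  have h1 := h s (List.mem_range.2 hs)
  rw [List.all_eq_true] at h1
  have h2 := h1 e0 (List.mem_range.2 he0)
  rw [List.all_eq_true] at h2
  have h3 := h2 e1 (List.mem_range.2 he1)
  simp only [hhyp, Bool.not_true, Bool.false_or, List.any_eq_true] at h3
  obtain ⟨u, hu, hg⟩ := h3
  rw [List.mem_range] at hu
  rw [Bool.and_eq_true] at hg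
  exact ⟨u, hu, by simpa using hg.1, hg.2⟩

/-! ### The main existence lemma -/

lemma main_exists (j m ℓ : ℕ) (hm3 : 3 ≤ m) (hm2 : m % 2 = 1)
    (h8 : m % 8 ≠ 1) (h32 : m % 32 ≠ 29) (hP : m + j ≤ 2 ^ ℓ) :
    ∃ k, KJ j m ≤ k ∧ k * m + j < m * 2 ^ ℓ + 37 * 2 ^ ℓ := by
  have hl2 : 2 ≤ ℓ := by
    by_contra h
    push_neg at h
    interval_cases ℓ <;> omega
  have hP0 : 0 < 2 ^ ℓ := Nat.pow_pos (by norm_num)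
  rcases Nat.eq_zero_or_pos (E m) with hE0 | hE0pos
  -- Case I : E m = 0
  · refine ⟨0 + 2 ^ ℓ + 1, KJ_le j m ℓ 0 ?_, ?_⟩
    · intro t ht1 ht2
      have e1 : (j + 0 * m) / 2 ^ ℓ = 0 := Nat.div_eq_of_lt (by omega)
      have e2 : (j + 0 * m + (m - 1)) / 2 ^ ℓ = 0 := Nat.div_eq_of_lt (by omega)
      rw [e1] at ht1
      rw [e2] at ht2
      have ht : t = 0 := by omega
      rw [ht, zero_add, E_zero, hE0]
    · have hexp : (0 + 2 ^ ℓ + 1) * m = 2 ^ ℓ * m + m := by ring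
      have hcomm : 2 ^ ℓ * m = m * 2 ^ ℓ := mul_comm _ _
      omega
  have hE1 : E m = 1 := by have := E_lt_two m; omega
  by_cases hEne : E m = E (m + 1)
  swap
  -- Case II : E m ≠ E (m+1)
  · have hl1 : ℓ - 1 + 1 = ℓ := by omega
    set Q := 2 ^ (ℓ - 1) with hQdef
    have hQ0 : 0 < Q := Nat.pow_pos (by norm_num)
    have hQP : 2 ^ ℓ = 2 * Q := by rw [← hl1, pow_succ]; ring
    have hdm := Nat.div_add_mod j m
    set t₀ := j / m with ht₀def
    set w := j % m with hwdef
    have hwm : w < m := Nat.mod_lt _ (by omega)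
    have ht₀3 : t₀ ≤ j / 3 := Nat.div_le_div_left (by omega) (by norm_num)
    have ht₀Q : t₀ ≤ Q := by omega
    set r := Q - t₀ with hrdef
    have hrm : r * m + t₀ * m = Q * m := by
      rw [← add_mul]
      congr 1
      omega
    have hc1 : m * t₀ = t₀ * m := mul_comm _ _
    have haw : j + r * m = Q * m + w := by omega
    have hw2Q : w + m ≤ 2 * Q := by
      rcases lt_or_ge j m with hjm | hjm
      · have : w = j := Nat.mod_eq_of_lt hjm
        omega
      · have h1t : 1 ≤ t₀ := (Nat.one_le_div_iff (by omega)).2 hjm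
        have : m * 1 ≤ m * t₀ := Nat.mul_le_mul_left m h1t
        omega
    have hwQ : w < Q := by omega
    have e1 : (j + r * m) / Q = m := by
      rw [haw, Nat.mul_add_div hQ0, Nat.div_eq_of_lt hwQ]
      ring
    have harg2 : j + r * m + (m - 1) = Q * m + (w + (m - 1)) := by omega
    have e2 : (j + r * m + (m - 1)) / Q = m + (w + (m - 1)) / Q := by
      rw [harg2, Nat.mul_add_div hQ0]
    have e2b : (w + (m - 1)) / Q ≤ 1 := by
      have : (w + (m - 1)) / Q < 2 := (Nat.div_lt_iff_lt_mul hQ0).2 (by omega)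
      omega
    refine ⟨r + Q + 1, ?_, ?_⟩
    · have := KJ_le j m (ℓ - 1) r ?_
      · simpa [← hQdef] using this
      · intro t ht1 ht2
        rw [← hQdef] at ht1 ht2
        rw [e1] at ht1
        rw [e2] at ht2
        have ht : t = m ∨ t = m + 1 := by omega
        rcases ht with ht | ht
        · rw [ht, ← two_mul, E_two_mul]
        · rw [ht, show m + 1 + m = 2 * m + 1 from by ring, E_two_mul_add_one]
          have := E_lt_two m
          have := E_lt_two (m + 1)
          omega
    · have hexp : (r + Q + 1) * m = r * m + Q * m + m := by ring
      have hmul : m * 2 ^ ℓ = 2 * (Q * m) := by rw [hQP]; ring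
      omega
  -- Case III : E m = 1 and E (m+1) = 1
  · have hE2 : E (m + 1) = 1 := by omega
    set s := m % 64 with hsdef
    set q := m / 64 with hqdef
    have hqs : 64 * q + s = m := Nat.div_add_mod m 64
    have hs64 : s < 64 := Nat.mod_lt _ (by norm_num)
    have hhypOK : hypOK s (E q) (E (q + 1)) = true := by
      have hEm64 : (E q + E s) % 2 = 1 := by
        have h := E_split64 q s hs64
        rw [show q * 64 + s = m from by omega, hE1] at h
        exact h.symm
      unfold hypOK
      rw [Bool.and_eq_true, Bool.and_eq_true, Bool.and_eq_true, Bool.and_eq_true]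
      refine ⟨⟨⟨⟨?_, ?_⟩, ?_⟩, ?_⟩, ?_⟩
      · rw [decide_eq_true_eq]; omega
      · rw [decide_eq_true_eq]; omega
      · rw [decide_eq_true_eq]; omega
      · rw [decide_eq_true_eq]; rw [E'_eq]; exact hEm64
      · split_ifs with h63
        · rw [decide_eq_true_eq]
          have h := E_split64 (q + 1) 0 (by norm_num)
          rw [show (q + 1) * 64 + 0 = m + 1 from by omega, hE2] at h
          rw [E_zero, add_zero, E_mod_two] at h
          exact h.symm
        · rw [decide_eq_true_eq]
          have h := E_split64 q (s + 1) (by omega)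
          rw [show q * 64 + (s + 1) = m + 1 from by omega, hE2] at h
          rw [show E' (s + 1) = E (s + 1) from E'_eq _]
          exact h.symm
    obtain ⟨u, hu35, hu1, hgood⟩ :=
      core s hs64 (E q) (E_lt_two q) (E (q + 1)) (E_lt_two (q + 1)) hhypOK
    unfold goodU at hgood
    rw [Bool.and_eq_true, decide_eq_true_eq, decide_eq_true_eq] at hgood
    obtain ⟨hg1, hg2⟩ := hgood
    rw [E'_eq, E'_eq] at hg1 hg2
    -- translate to E (u + m) = E u and E (u + 1 + m) = E (u + 1)
    have key : ∀ v, v ≤ 35 → (epsval (E q) (E (q + 1)) (v + s) + E ((v + s) % 64)) % 2 = E v →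
        E (v + m) = E v := by
      intro v hv hcond
      rcases lt_or_ge (v + s) 64 with hc | hc
      · have h := E_split64 q (v + s) hc
        rw [show q * 64 + (v + s) = v + m from by omega] at h
        rw [epsval, if_pos hc, Nat.mod_eq_of_lt hc] at hcond
        rw [h, hcond]
      · have h := E_split64 (q + 1) (v + s - 64) (by omega)
        rw [show (q + 1) * 64 + (v + s - 64) = v + m from by omega] at h
        rw [epsval, if_neg (by omega), show (v + s) % 64 = v + s - 64 from by omega] at hcond
        rw [h, hcond]
    have hEum : E (u + m) = E u := key u (by omega) hg1
    have hEum1 : E (u + 1 + m) = E (u + 1) := key (u + 1) (by omega) hg2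
    -- construction
    have hjP : j < 2 ^ ℓ := by omega
    have hNlo : 2 ^ ℓ ≤ u * 2 ^ ℓ := Nat.le_mul_of_pos_left _ (by omega)
    have hN34 : u * 2 ^ ℓ ≤ 34 * 2 ^ ℓ := Nat.mul_le_mul_right _ (by omega)
    have hjN : j ≤ u * 2 ^ ℓ := le_trans (le_of_lt hjP) hNlo
    obtain ⟨r, hR1, hR2⟩ : ∃ R, m * R ≤ u * 2 ^ ℓ - j + m - 1 ∧
        u * 2 ^ ℓ - j + m - 1 < m * R + m := by
      have hd := Nat.div_add_mod (u * 2 ^ ℓ - j + m - 1) m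
      have hm' : (u * 2 ^ ℓ - j + m - 1) % m < m := Nat.mod_lt _ (by omega)
      refine ⟨(u * 2 ^ ℓ - j + m - 1) / m, Nat.le.intro hd, ?_⟩
      calc u * 2 ^ ℓ - j + m - 1
          = m * ((u * 2 ^ ℓ - j + m - 1) / m) + (u * 2 ^ ℓ - j + m - 1) % m := hd.symm
        _ < m * ((u * 2 ^ ℓ - j + m - 1) / m) + m := Nat.add_lt_add_left hm' _
    have hcm : m * r = r * m := mul_comm _ _
    have h_lo : u * 2 ^ ℓ ≤ j + r * m := by omega
    have h_up : j + r * m < u * 2 ^ ℓ + m := by omega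
    have e1 : (j + r * m) / 2 ^ ℓ = u := by
      refine Nat.div_eq_of_lt_le h_lo ?_
      have : (u + 1) * 2 ^ ℓ = u * 2 ^ ℓ + 2 ^ ℓ := by ring
      omega
    have e2 : (j + r * m + (m - 1)) / 2 ^ ℓ < u + 2 := by
      refine (Nat.div_lt_iff_lt_mul hP0).2 ?_
      have : (u + 2) * 2 ^ ℓ = u * 2 ^ ℓ + 2 * 2 ^ ℓ := by ring
      omega
    refine ⟨r + 2 ^ ℓ + 1, KJ_le j m ℓ r ?_, ?_⟩
    · intro t ht1 ht2
      rw [e1] at ht1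
      have ht2' := lt_of_le_of_lt ht2 e2
      have ht : t = u ∨ t = u + 1 := by omega
      rcases ht with ht | ht
      · rw [ht]; exact hEum
      · rw [ht]; exact hEum1
    · have hexp : (r + 2 ^ ℓ + 1) * m = r * m + 2 ^ ℓ * m + m := by ring
      have hcomm : 2 ^ ℓ * m = m * 2 ^ ℓ := mul_comm _ _
      omega

theorem KJ_lt_remaining_odd (j m ℓ : ℕ) (hm : 0 < m) (hodd : Odd m)
    (h8 : m % 8 ≠ 1) (h32 : m % 32 ≠ 29)
    (hℓ : IsLeast {l : ℕ | m + j ≤ 2 ^ l} ℓ) :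
    (KJ j m : ℝ) < 2 ^ ℓ + (37 * (2 : ℝ) ^ ℓ - j) / m := by
  have hm2 : m % 2 = 1 := Nat.odd_iff.1 hodd
  have hm3 : 3 ≤ m := by omega
  have hP : m + j ≤ 2 ^ ℓ := hℓ.1
  obtain ⟨k, hKk, hbud⟩ := main_exists j m ℓ hm3 hm2 h8 h32 hP
  have hmR : (0 : ℝ) < m := by exact_mod_cast (by omega : 0 < m)
  have h1 : (KJ j m : ℝ) ≤ k := by exact_mod_cast hKk
  have h2 : (k : ℝ) * m + j < m * 2 ^ ℓ + 37 * 2 ^ ℓ := by exact_mod_cast hbud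
  have h3 : (k : ℝ) < 2 ^ ℓ + (37 * (2 : ℝ) ^ ℓ - j) / m := by
    rw [show (2:ℝ) ^ ℓ + (37 * (2:ℝ) ^ ℓ - j) / m = (m * 2 ^ ℓ + (37 * 2 ^ ℓ - j)) / m from by
      field_simp]
    rw [lt_div_iff₀ hmR]
    linarith
  linarith
end

section
/- Let j and m be nonnegative integers with m ≥ 2 and m ≢ 1 (mod 8). Let ℓ = ⌈log₂(m+j)⌉ (the least nonnegative integer with m + j ≤ 2^ℓ), and assume j < 2^{ℓ−1}. Then, as real numbers, 𝔎_j(m) ≤ 2^ℓ + 2^{ℓ+1}·max{2^ℓ + 2 + j, 20}/(2^{ℓ−1} − j). -/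
/-- Parity of the binary digit sum of `n`. -/
def par (n : ℕ) : ℕ := ((Nat.digits 2 n).sum) % 2

lemma par_lt (n : ℕ) : par n < 2 := Nat.mod_lt _ (by norm_num)

lemma par_rec (n : ℕ) : par n = (n % 2 + par (n / 2)) % 2 := by
  rcases Nat.eq_zero_or_pos n with h | h
  · subst h; simp [par]
  · unfold par
    rw [Nat.digits_def' (by norm_num) h]
    simp [List.sum_cons, Nat.add_mod]

lemma par_split (L : ℕ) : ∀ a b : ℕ, b < 2 ^ L → par (2 ^ L * a + b) = (par a + par b) % 2 := by
  induction L with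
  | zero =>
    intro a b hb
    interval_cases b
    have h0 : par 0 = 0 := by simp [par]
    simp [h0, Nat.mod_eq_of_lt (par_lt a)]
  | succ L IH =>
    intro a b hb
    have hpow : 2 ^ (L + 1) * a = 2 * (2 ^ L * a) := by rw [pow_succ]; ring
    have hb2 : b / 2 < 2 ^ L := by
      have : b < 2 ^ L * 2 := by rw [← pow_succ]; exact hb
      omega
    have e : 2 ^ (L + 1) * a + b = 2 * (2 ^ L * a + b / 2) + b % 2 := by
      rw [hpow]; omega
    rw [e, par_rec (2 * (2 ^ L * a + b / 2) + b % 2)]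
    have hdiv : (2 * (2 ^ L * a + b / 2) + b % 2) / 2 = 2 ^ L * a + b / 2 := by omega
    have hmod : (2 * (2 ^ L * a + b / 2) + b % 2) % 2 = b % 2 := by omega
    rw [hdiv, hmod, IH a (b / 2) hb2, par_rec b]
    have := par_lt a; have := par_lt (b / 2)
    omega

lemma par_point (L m i n1 n2 : ℕ) (hm : m ≤ 2 ^ L) (hi : i < m)
    (hc : n1 % 2 ^ L = n2 % 2 ^ L)
    (h1 : par (n1 / 2 ^ L) = par (n2 / 2 ^ L))
    (h2 : par (n1 / 2 ^ L + 1) = par (n2 / 2 ^ L + 1)) :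
    par (n1 + i) = par (n2 + i) := by
  have hL : 0 < 2 ^ L := Nat.pow_pos (by norm_num)
  have d1 := Nat.div_add_mod n1 (2 ^ L)
  have d2 := Nat.div_add_mod n2 (2 ^ L)
  have hc1 : n1 % 2 ^ L < 2 ^ L := Nat.mod_lt _ hL
  by_cases hcase : n1 % 2 ^ L + i < 2 ^ L
  · have e1 : n1 + i = 2 ^ L * (n1 / 2 ^ L) + (n1 % 2 ^ L + i) := by omega
    have e2 : n2 + i = 2 ^ L * (n2 / 2 ^ L) + (n1 % 2 ^ L + i) := by omega
    rw [e1, e2, par_split L _ _ hcase, par_split L _ _ hcase, h1]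
  · set u := n1 % 2 ^ L + i - 2 ^ L with hu
    have hu2 : u < 2 ^ L := by omega
    have q1 : 2 ^ L * (n1 / 2 ^ L + 1) = 2 ^ L * (n1 / 2 ^ L) + 2 ^ L := by ring
    have q2 : 2 ^ L * (n2 / 2 ^ L + 1) = 2 ^ L * (n2 / 2 ^ L) + 2 ^ L := by ring
    have e1 : n1 + i = 2 ^ L * (n1 / 2 ^ L + 1) + u := by omega
    have e2 : n2 + i = 2 ^ L * (n2 / 2 ^ L + 1) + u := by omega
    rw [e1, e2, par_split L _ _ hu2, par_split L _ _ hu2, h2]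

lemma tm_succ_s18 (n : ℕ) : tm (n + 1) = par n := by simp [tm, par]

lemma block_eq (L j m r1 r2 : ℕ) (hm : m ≤ 2 ^ L)
    (hc : (j + r1 * m) % 2 ^ L = (j + r2 * m) % 2 ^ L)
    (h1 : par ((j + r1 * m) / 2 ^ L) = par ((j + r2 * m) / 2 ^ L))
    (h2 : par ((j + r1 * m) / 2 ^ L + 1) = par ((j + r2 * m) / 2 ^ L + 1)) :
    tmBlock j m r1 = tmBlock j m r2 := by
  unfold tmBlock
  apply List.map_congr_left
  intro i hi
  rw [List.mem_range] at hi
  rw [tm_succ_s18, tm_succ_s18]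
  exact par_point L m i _ _ hm hi hc h1 h2

lemma not_antipower (L j m : ℕ) (hm : m ≤ 2 ^ L) :
    ¬ IsAntipowerJfix j (4 * 2 ^ L + 1) m := by
  intro hap
  have hL : 0 < 2 ^ L := Nat.pow_pos (by norm_num)
  set k := 4 * 2 ^ L + 1 with hk
  let f : Fin k → Fin (2 ^ L) × Fin 2 × Fin 2 := fun r =>
    (⟨(j + r.val * m) % 2 ^ L, Nat.mod_lt _ hL⟩,
     ⟨par ((j + r.val * m) / 2 ^ L), par_lt _⟩,
     ⟨par ((j + r.val * m) / 2 ^ L + 1), par_lt _⟩)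
  have hcard : Fintype.card (Fin (2 ^ L) × Fin 2 × Fin 2) < Fintype.card (Fin k) := by
    simp [hk]; omega
  obtain ⟨a, b, hab, hfab⟩ := Fintype.exists_ne_map_eq_of_card_lt f hcard
  have h1 := congrArg (fun x => x.1.val) hfab
  have h2 := congrArg (fun x => x.2.1.val) hfab
  have h3 := congrArg (fun x => x.2.2.val) hfab
  simp only [f] at h1 h2 h3
  have hblk : tmBlock j m a.val = tmBlock j m b.val := block_eq L j m _ _ hm h1 h2 h3
  exact hab (Fin.ext (hap a.val a.isLt b.val b.isLt hblk))

theorem KJ_le_not_one_mod_eight_uniform (j m ℓ : ℕ) (hm : 2 ≤ m) (h8 : m % 8 ≠ 1)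
    (hℓ : IsLeast {l : ℕ | m + j ≤ 2 ^ l} ℓ)
    (hj : j < 2 ^ (ℓ - 1)) :
    (KJ j m : ℝ) ≤ 2 ^ ℓ +
      (2 : ℝ) ^ (ℓ + 1) * max ((2 : ℝ) ^ ℓ + 2 + j) 20 / ((2 : ℝ) ^ (ℓ - 1) - j) := by
  have hmem : m + j ≤ 2 ^ ℓ := hℓ.1
  have hℓ1 : 1 ≤ ℓ := by
    rcases Nat.eq_zero_or_pos ℓ with h | h
    · subst h; simp at hmem; omega
    · exact h
  have hmle : m ≤ 2 ^ ℓ := by omega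
  have hnot := not_antipower ℓ j m hmle
  have hKJ : KJ j m ≤ 4 * 2 ^ ℓ + 1 := Nat.sInf_le ⟨Nat.succ_pos _, hnot⟩
  have hcast : (KJ j m : ℝ) ≤ 4 * 2 ^ ℓ + 1 := by exact_mod_cast hKJ
  refine hcast.trans ?_
  have hp1 : (1 : ℝ) ≤ 2 ^ (ℓ - 1) := one_le_pow₀ (by norm_num)
  have hjr : (j : ℝ) + 1 ≤ 2 ^ (ℓ - 1) := by exact_mod_cast hj
  have h2ℓ : (2 : ℝ) ^ ℓ = 2 * 2 ^ (ℓ - 1) := by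
    conv_lhs => rw [show ℓ = (ℓ - 1) + 1 from by omega]
    rw [pow_succ]; ring
  have h2ℓ1 : (2 : ℝ) ^ (ℓ + 1) = 4 * 2 ^ (ℓ - 1) := by rw [pow_succ, h2ℓ]; ring
  set p : ℝ := 2 ^ (ℓ - 1) with hp
  set M : ℝ := max ((2 : ℝ) ^ ℓ + 2 + j) 20 with hMdef
  have hjnn : (0 : ℝ) ≤ (j : ℝ) := Nat.cast_nonneg j
  have hMge : 2 * p + 2 ≤ M := by
    have h := le_max_left ((2 : ℝ) ^ ℓ + 2 + (j : ℝ)) 20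
    rw [← hMdef] at h
    rw [h2ℓ] at h
    linarith
  have hd : 0 < p - j := by linarith
  have key : (6 * p + 1) * (p - (j : ℝ)) ≤ 4 * p * M := by nlinarith
  have hfrac : 6 * p + 1 ≤ 4 * p * M / (p - j) := (le_div_iff₀ hd).mpr key
  rw [h2ℓ, h2ℓ1]
  linarith
end
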